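/- arXiv:2308.14069 — 2 statements merged into one kernel-verified Lean document; each statement's English description precedes it below -/
import Mathlib

section
/- Let p be an odd prime and let χ be the Legendre symbol modulo p. Then for every a ∈ F_p, every s ∈ F_p, and every positive integer h one has |∑_{j=1}^{h} χ((s+j+a)·(s+j+a+1))| ≤ h·(1 − 1/(2·d_*(p))) + 4. -/
open Finset

/-- The set of nonzero quadratic residues in `F_p`. -/
def quadRes (p : ℕ) [Fact p.Prime] : Finset (ZMod p) :=
  Finset.univ.filter fun x => ∃ y : ZMod p, y ≠ 0 ∧ y ^ 2 = x

/-- The set of quadratic non-residues in `F_p`. -/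
def nonRes (p : ℕ) [Fact p.Prime] : Finset (ZMod p) :=
  Finset.univ.filter fun x => x ≠ 0 ∧ x ∉ quadRes p

/-- The Legendre symbol on `F_p`: `1` on residues, `−1` on non-residues, `0` at `0`. -/
noncomputable def chi (p : ℕ) [Fact p.Prime] (y : ZMod p) : ℝ :=
  if y = 0 then 0 else if y ∈ quadRes p then 1 else -1

/-- `d_*(p)`: the maximal length `l` of an interval `{t+1, …, t+l}` contained entirely
in the residues or entirely in the non-residues. -/
noncomputable def dstar (p : ℕ) [Fact p.Prime] : ℕ :=
  sSup {l : ℕ | ∃ t : ZMod p,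
    (∀ j ∈ Finset.Icc 1 l, t + (j : ZMod p) ∈ quadRes p) ∨
    (∀ j ∈ Finset.Icc 1 l, t + (j : ZMod p) ∈ nonRes p)}

section Helpers

variable (p : ℕ) [Fact p.Prime]

lemma mem_quadRes_iff (y : ZMod p) : y ∈ quadRes p ↔ IsSquare y ∧ y ≠ 0 := by
  simp only [quadRes, mem_filter, mem_univ, true_and]
  constructor
  · rintro ⟨z, hz, rfl⟩
    exact ⟨⟨z, (pow_two z)⟩, pow_ne_zero _ hz⟩
  · rintro ⟨⟨z, rfl⟩, h0⟩
    refine ⟨z, fun hz => h0 (by simp [hz]), pow_two z⟩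

lemma chi_eq (y : ZMod p) : chi p y = ((quadraticChar (ZMod p) y : ℤ) : ℝ) := by
  rw [quadraticChar_apply, quadraticCharFun]
  unfold chi
  by_cases h0 : y = 0
  · simp [h0]
  · by_cases hsq : IsSquare y
    · simp [h0, hsq, (mem_quadRes_iff p y).mpr ⟨hsq, h0⟩]
    · have hnq : y ∉ quadRes p := fun hy => hsq ((mem_quadRes_iff p y).mp hy).1
      simp [h0, hsq, hnq]

lemma chi_mul (u v : ZMod p) : chi p (u * v) = chi p u * chi p v := by
  rw [chi_eq, chi_eq, chi_eq, map_mul]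
  push_cast
  ring

lemma chi_cases (y : ZMod p) : chi p y = 0 ∨ chi p y = 1 ∨ chi p y = -1 := by
  unfold chi; split_ifs <;> simp

lemma chi_eq_zero_iff (y : ZMod p) : chi p y = 0 ↔ y = 0 := by
  unfold chi
  split_ifs with h1 h2 <;> simp [h1]

lemma chi_pm (y : ZMod p) (h : chi p y ≠ 0) : chi p y = 1 ∨ chi p y = -1 :=
  (chi_cases p y).resolve_left h

lemma memQR_of_chi (y : ZMod p) (h : chi p y = 1) : y ∈ quadRes p := by
  unfold chi at h
  split_ifs at h with h1 h2
  · norm_num at h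
  · exact h2
  · norm_num at h

lemma memNR_of_chi (y : ZMod p) (h : chi p y = -1) : y ∈ nonRes p := by
  unfold chi at h
  split_ifs at h with h1 h2
  · norm_num at h
  · norm_num at h
  · exact mem_filter.mpr ⟨mem_univ _, h1, h2⟩

lemma chi_le_one (y : ZMod p) : chi p y ≤ 1 := by
  rcases chi_cases p y with h | h | h <;> rw [h] <;> norm_num

lemma neg_one_le_chi (y : ZMod p) : -1 ≤ chi p y := by
  rcases chi_cases p y with h | h | h <;> rw [h] <;> norm_num

lemma abs_chi_le_one (y : ZMod p) : |chi p y| ≤ 1 :=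
  abs_le.mpr ⟨neg_one_le_chi p y, chi_le_one p y⟩

/-- The defining set of `dstar` is bounded above by `p`. -/
lemma dSet_bddAbove : BddAbove {l : ℕ | ∃ t : ZMod p,
    (∀ j ∈ Finset.Icc 1 l, t + (j : ZMod p) ∈ quadRes p) ∨
    (∀ j ∈ Finset.Icc 1 l, t + (j : ZMod p) ∈ nonRes p)} := by
  haveI : NeZero p := ⟨(Fact.out : p.Prime).pos.ne'⟩
  refine ⟨p, fun l hl => ?_⟩
  by_contra hlp
  push_neg at hlp
  obtain ⟨t, ht⟩ := hl
  have hp1 : 1 < p := (Fact.out : p.Prime).one_lt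
  obtain ⟨j, hj1, hjl, hj0⟩ : ∃ j : ℕ, 1 ≤ j ∧ j ≤ l ∧ t + (j : ZMod p) = 0 := by
    by_cases hv : (-t).val = 0
    · refine ⟨p, hp1.le, hlp.le, ?_⟩
      have h0 : (-t : ZMod p) = 0 := by rwa [ZMod.val_eq_zero] at hv
      have ht0 : t = 0 := by
        have := neg_eq_zero.mp h0; exact this
      simp [ht0, ZMod.natCast_self]
    · refine ⟨(-t).val, Nat.one_le_iff_ne_zero.mpr hv, le_trans (ZMod.val_lt _).le hlp.le, ?_⟩
      have : (((-t).val : ℕ) : ZMod p) = -t := by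
        rw [ZMod.natCast_val, ZMod.cast_id]
      rw [this]; ring
  have hjm : j ∈ Finset.Icc 1 l := mem_Icc.mpr ⟨hj1, hjl⟩
  rcases ht with h1 | h1
  · have hz := h1 j hjm
    rw [hj0] at hz
    obtain ⟨z, hzne, hz2⟩ := (mem_filter.mp hz).2
    exact hzne (by
      have : z ^ 2 = 0 := hz2
      exact pow_eq_zero_iff (by norm_num) |>.mp this)
  · have hz := h1 j hjm
    rw [hj0] at hz
    exact (mem_filter.mp hz).2.1 rfl

lemma le_dstar_of_mem {l : ℕ} (hl : ∃ t : ZMod p,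
    (∀ j ∈ Finset.Icc 1 l, t + (j : ZMod p) ∈ quadRes p) ∨
    (∀ j ∈ Finset.Icc 1 l, t + (j : ZMod p) ∈ nonRes p)) : l ≤ dstar p :=
  le_csSup (dSet_bddAbove p) hl

lemma one_le_dstar : 1 ≤ dstar p := by
  apply le_dstar_of_mem
  refine ⟨0, Or.inl fun j hj => ?_⟩
  have hj1 : j = 1 := by
    rw [mem_Icc] at hj; omega
  subst hj1
  simp only [Nat.cast_one, zero_add]
  exact mem_filter.mpr ⟨mem_univ _, 1, one_ne_zero, one_pow 2⟩

lemma dstar_succ_false (t : ZMod p) (c : ℝ) (hc : c = 1 ∨ c = -1)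
    (H : ∀ j ∈ Finset.Icc 1 (dstar p + 1), chi p (t + (j : ZMod p)) = c) : False := by
  have hmem : dstar p + 1 ≤ dstar p := by
    apply le_dstar_of_mem
    refine ⟨t, ?_⟩
    rcases hc with rfl | rfl
    · exact Or.inl fun j hj => memQR_of_chi p _ (H j hj)
    · exact Or.inr fun j hj => memNR_of_chi p _ (H j hj)
  omega

lemma solve_eq {a b c : ℝ} (ha : a = 1 ∨ a = -1) (h : a * b = c) : b = a * c := by
  rcases ha with rfl | rfl <;> linarith

lemma ne_zero_left {a b c : ℝ} (h : a * b = c) (hc : c ≠ 0) : a ≠ 0 := by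
  rintro rfl; simp at h; exact hc h.symm

lemma ne_zero_right {a b c : ℝ} (h : a * b = c) (hc : c ≠ 0) : b ≠ 0 := by
  rintro rfl; simp at h; exact hc h.symm

/-- No block of `2 d` consecutive terms can be all `+1`. -/
lemma blockA (t : ZMod p)
    (H : ∀ k ∈ Finset.range (2 * dstar p),
      chi p ((t + (k : ZMod p) + 1) * (t + (k : ZMod p) + 2)) = 1) : False := by
  have hd1 : 1 ≤ dstar p := one_le_dstar p
  set c := chi p (t + 1) with hcdef
  have h0 := H 0 (mem_range.mpr (by omega))
  rw [chi_mul] at h0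
  simp only [Nat.cast_zero, add_zero] at h0
  have hc0 : c ≠ 0 := ne_zero_left h0 one_ne_zero
  have hcpm : c = 1 ∨ c = -1 := chi_pm p _ hc0
  have claim : ∀ k : ℕ, k ≤ 2 * dstar p → chi p (t + (k : ZMod p) + 1) = c := by
    intro k
    induction k with
    | zero => intro _; simp [hcdef]
    | succ k ih =>
      intro hk
      have hkr : k < 2 * dstar p := by omega
      have hterm := H k (mem_range.mpr hkr)
      rw [chi_mul] at hterm
      have ihk := ih (by omega)
      rw [ihk] at hterm
      have : chi p (t + (k : ZMod p) + 2) = c * 1 := solve_eq hcpm hterm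
      rw [mul_one] at this
      have harg : t + ((k + 1 : ℕ) : ZMod p) + 1 = t + (k : ZMod p) + 2 := by
        push_cast; ring
      rw [harg]
      exact this
  apply dstar_succ_false p t c hcpm
  intro j hj
  rw [mem_Icc] at hj
  obtain ⟨k, rfl⟩ : ∃ k, j = k + 1 := ⟨j - 1, by omega⟩
  have hk : k ≤ 2 * dstar p := by omega
  have := claim k hk
  have harg : t + ((k + 1 : ℕ) : ZMod p) = t + (k : ZMod p) + 1 := by
    push_cast; ring
  rw [harg]
  exact this

/-- No block of `2 d` consecutive terms can be all `−1` (uses `p ≠ 2`). -/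
lemma blockB (hp : p ≠ 2) (t : ZMod p)
    (H : ∀ k ∈ Finset.range (2 * dstar p),
      chi p ((t + (k : ZMod p) + 1) * (t + (k : ZMod p) + 2)) = -1) : False := by
  have hd1 : 1 ≤ dstar p := one_le_dstar p
  set c := chi p (t + 1) with hcdef
  have h0 := H 0 (mem_range.mpr (by omega))
  rw [chi_mul] at h0
  simp only [Nat.cast_zero, add_zero] at h0
  have hc0 : c ≠ 0 := ne_zero_left h0 (by norm_num)
  have hcpm : c = 1 ∨ c = -1 := chi_pm p _ hc0
  -- chi is constant `c` along the odd-offset subsequence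
  have claim : ∀ m : ℕ, m ≤ dstar p → chi p (t + ((2 * m : ℕ) : ZMod p) + 1) = c := by
    intro m
    induction m with
    | zero => intro _; simp [hcdef]
    | succ m ih =>
      intro hm
      have h1 := H (2 * m) (mem_range.mpr (by omega))
      have h2 := H (2 * m + 1) (mem_range.mpr (by omega))
      rw [chi_mul] at h1 h2
      have ihm := ih (by omega)
      rw [ihm] at h1
      -- b := chi p (t + 2m + 2)
      have hb0 : chi p (t + ((2 * m : ℕ) : ZMod p) + 2) ≠ 0 := ne_zero_right h1 (by norm_num)
      have hbpm := chi_pm p _ hb0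
      have hb : chi p (t + ((2 * m : ℕ) : ZMod p) + 2) = c * (-1) := solve_eq hcpm h1
      have harg1 : t + ((2 * m + 1 : ℕ) : ZMod p) + 1 = t + ((2 * m : ℕ) : ZMod p) + 2 := by
        push_cast; ring
      rw [harg1, hb] at h2
      have hbpm' : c * (-1) = 1 ∨ c * (-1) = -1 := by
        rcases hcpm with h' | h' <;> rw [h'] <;> norm_num
      have hx : chi p (t + ((2 * m + 1 : ℕ) : ZMod p) + 2) = (c * (-1)) * (-1) :=
        solve_eq hbpm' h2
      have harg2 : t + ((2 * (m + 1) : ℕ) : ZMod p) + 1 = t + ((2 * m + 1 : ℕ) : ZMod p) + 2 := by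
        push_cast; ring
      rw [harg2, hx]
      ring
  -- 2 ≠ 0 in ZMod p
  have h2ne : (2 : ZMod p) ≠ 0 := by
    intro h2
    have : ((2 : ℕ) : ZMod p) = 0 := by push_cast; exact h2
    rw [ZMod.natCast_eq_zero_iff] at this
    have := (Nat.prime_dvd_prime_iff_eq (Fact.out : p.Prime) Nat.prime_two).mp this
    exact hp this
  have hchi2 : chi p 2 ≠ 0 := fun h => h2ne ((chi_eq_zero_iff p 2).mp h)
  have hchi2pm : chi p 2 = 1 ∨ chi p 2 = -1 := chi_pm p _ hchi2
  set w : ZMod p := (t - 1) * (2 : ZMod p)⁻¹ with hwdef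
  have h2w : (2 : ZMod p) * w = t - 1 := by
    rw [hwdef]
    field_simp
  have hc' : chi p 2 * c = 1 ∨ chi p 2 * c = -1 := by
    rcases hchi2pm with h2' | h2' <;> rcases hcpm with hc' | hc' <;>
      rw [h2', hc'] <;> norm_num
  apply dstar_succ_false p w (chi p 2 * c) hc'
  intro j hj
  rw [mem_Icc] at hj
  obtain ⟨m, rfl⟩ : ∃ m, j = m + 1 := ⟨j - 1, by omega⟩
  have hm : m ≤ dstar p := by omega
  have hcm := claim m hm
  have harg : t + ((2 * m : ℕ) : ZMod p) + 1 = 2 * (w + ((m + 1 : ℕ) : ZMod p)) := by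
    push_cast
    rw [mul_add, h2w]
    ring
  rw [harg, chi_mul] at hcm
  have := solve_eq hchi2pm hcm
  rw [this]

end Helpers

section Main

variable (p : ℕ) [Fact p.Prime]

/-- Any block of `2 d` consecutive terms has sum at most `2 d − 1` in absolute value. -/
lemma block_bound (hp : p ≠ 2) (t : ZMod p) :
    |∑ k ∈ Finset.range (2 * dstar p),
        chi p ((t + (k : ZMod p) + 1) * (t + (k : ZMod p) + 2))| ≤
      2 * (dstar p : ℝ) - 1 := by
  have hd1 : 1 ≤ dstar p := one_le_dstar p
  set F : ℕ → ℝ := fun k => chi p ((t + (k : ZMod p) + 1) * (t + (k : ZMod p) + 2)) with hF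
  have hcard : ((Finset.range (2 * dstar p)).card : ℝ) = 2 * (dstar p : ℝ) := by
    rw [card_range]; push_cast; ring
  -- upper bound
  have hup : ∑ k ∈ Finset.range (2 * dstar p), F k ≤ 2 * (dstar p : ℝ) - 1 := by
    obtain ⟨k₀, hk₀mem, hk₀⟩ : ∃ k₀ ∈ Finset.range (2 * dstar p), F k₀ ≠ 1 := by
      by_contra hcon
      push_neg at hcon
      exact blockA p t hcon
    have hk₀le : F k₀ ≤ 0 := by
      rcases chi_cases p ((t + (k₀ : ZMod p) + 1) * (t + (k₀ : ZMod p) + 2)) with h | h | h <;>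
        simp only [hF] at hk₀ ⊢ <;> rw [h] <;> first | (exact absurd h hk₀) | norm_num
    rw [← Finset.sum_erase_add _ _ hk₀mem]
    have h1 : ∑ k ∈ (Finset.range (2 * dstar p)).erase k₀, F k ≤
        ((Finset.range (2 * dstar p)).erase k₀).card • (1 : ℝ) := by
      apply Finset.sum_le_card_nsmul
      intro x _
      exact chi_le_one p _
    have h2 : (((Finset.range (2 * dstar p)).erase k₀).card : ℝ) = 2 * (dstar p : ℝ) - 1 := by
      rw [Finset.card_erase_of_mem hk₀mem, card_range]
      have : 1 ≤ 2 * dstar p := by omega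
      push_cast [Nat.cast_sub this]
      ring
    rw [nsmul_eq_mul, mul_one] at h1
    linarith [h1, h2.le, hk₀le]
  -- lower bound
  have hlo : -(2 * (dstar p : ℝ) - 1) ≤ ∑ k ∈ Finset.range (2 * dstar p), F k := by
    obtain ⟨k₀, hk₀mem, hk₀⟩ : ∃ k₀ ∈ Finset.range (2 * dstar p), F k₀ ≠ -1 := by
      by_contra hcon
      push_neg at hcon
      exact blockB p hp t hcon
    have hk₀le : 0 ≤ F k₀ := by
      rcases chi_cases p ((t + (k₀ : ZMod p) + 1) * (t + (k₀ : ZMod p) + 2)) with h | h | h <;>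
        simp only [hF] at hk₀ ⊢ <;> rw [h] <;> first | (exact absurd h hk₀) | norm_num
    rw [← Finset.sum_erase_add _ _ hk₀mem]
    have h1 : ((Finset.range (2 * dstar p)).erase k₀).card • (-1 : ℝ) ≤
        ∑ k ∈ (Finset.range (2 * dstar p)).erase k₀, F k := by
      apply Finset.card_nsmul_le_sum
      intro x _
      exact neg_one_le_chi p _
    have h2 : (((Finset.range (2 * dstar p)).erase k₀).card : ℝ) = 2 * (dstar p : ℝ) - 1 := by
      rw [Finset.card_erase_of_mem hk₀mem, card_range]
      have : 1 ≤ 2 * dstar p := by omega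
      push_cast [Nat.cast_sub this]
      ring
    rw [nsmul_eq_mul, mul_neg_one] at h1
    linarith [h1, h2.le, hk₀le]
  exact abs_le.mpr ⟨hlo, hup⟩

lemma main_bound (hp : p ≠ 2) (n : ℕ) : ∀ t : ZMod p,
    |∑ k ∈ Finset.range n, chi p ((t + (k : ZMod p) + 1) * (t + (k : ZMod p) + 2))| ≤
      (n : ℝ) * (1 - 1 / (2 * (dstar p : ℝ))) + 1 := by
  induction n using Nat.strong_induction_on with
  | _ n IH =>
    intro t
    have hd1 : 1 ≤ dstar p := one_le_dstar p
    have hdR : (1 : ℝ) ≤ (dstar p : ℝ) := by exact_mod_cast hd1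
    have hdpos : (0 : ℝ) < 2 * (dstar p : ℝ) := by linarith
    by_cases hn : n < 2 * dstar p
    · have habs : |∑ k ∈ Finset.range n,
          chi p ((t + (k : ZMod p) + 1) * (t + (k : ZMod p) + 2))| ≤ (n : ℝ) := by
        calc |∑ k ∈ Finset.range n,
            chi p ((t + (k : ZMod p) + 1) * (t + (k : ZMod p) + 2))|
            ≤ ∑ k ∈ Finset.range n,
              |chi p ((t + (k : ZMod p) + 1) * (t + (k : ZMod p) + 2))| :=
              Finset.abs_sum_le_sum_abs _ _
          _ ≤ ∑ k ∈ Finset.range n, (1 : ℝ) :=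
              Finset.sum_le_sum fun k _ => abs_chi_le_one p _
          _ = (n : ℝ) := by rw [Finset.sum_const, card_range, nsmul_eq_mul, mul_one]
      have hnle : (n : ℝ) ≤ 2 * (dstar p : ℝ) := by
        have : n ≤ 2 * dstar p := by omega
        exact_mod_cast this
      have hkey : (n : ℝ) * (1 / (2 * (dstar p : ℝ))) ≤ 1 := by
        rw [mul_one_div, div_le_one hdpos]
        exact hnle
      have hex : (n : ℝ) * (1 - 1 / (2 * (dstar p : ℝ))) =
          (n : ℝ) - (n : ℝ) * (1 / (2 * (dstar p : ℝ))) := by ring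
      linarith
    · push_neg at hn
      obtain ⟨m, rfl⟩ : ∃ m, n = 2 * dstar p + m := ⟨n - 2 * dstar p, by omega⟩
      rw [Finset.sum_range_add]
      have h1 := block_bound p hp t
      have h2 := IH m (by omega) (t + ((2 * dstar p : ℕ) : ZMod p))
      have hsum2 : ∑ k ∈ Finset.range m,
          chi p ((t + ((2 * dstar p + k : ℕ) : ZMod p) + 1) *
            (t + ((2 * dstar p + k : ℕ) : ZMod p) + 2)) =
          ∑ k ∈ Finset.range m,
          chi p ((t + ((2 * dstar p : ℕ) : ZMod p) + (k : ZMod p) + 1) *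
            (t + ((2 * dstar p : ℕ) : ZMod p) + (k : ZMod p) + 2)) := by
        apply Finset.sum_congr rfl
        intro k _
        congr 1
        push_cast
        ring
      rw [hsum2]
      have htri := abs_add_le
        (∑ k ∈ Finset.range (2 * dstar p),
          chi p ((t + (k : ZMod p) + 1) * (t + (k : ZMod p) + 2)))
        (∑ k ∈ Finset.range m,
          chi p ((t + ((2 * dstar p : ℕ) : ZMod p) + (k : ZMod p) + 1) *
            (t + ((2 * dstar p : ℕ) : ZMod p) + (k : ZMod p) + 2)))
      have hblocks : (2 * (dstar p : ℝ)) * (1 - 1 / (2 * (dstar p : ℝ))) =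
          2 * (dstar p : ℝ) - 1 := by
        field_simp
      have hcast : ((2 * dstar p + m : ℕ) : ℝ) = 2 * (dstar p : ℝ) + (m : ℝ) := by
        push_cast; ring
      rw [hcast]
      have hexpand : (2 * (dstar p : ℝ) + (m : ℝ)) * (1 - 1 / (2 * (dstar p : ℝ))) =
          (2 * (dstar p : ℝ)) * (1 - 1 / (2 * (dstar p : ℝ))) +
          (m : ℝ) * (1 - 1 / (2 * (dstar p : ℝ))) := by ring
      linarith

end Main

theorem stmt6 (p : ℕ) [Fact p.Prime] (hp : p ≠ 2) (a s : ZMod p) (h : ℕ) (hh : 0 < h) :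
    |∑ j ∈ Finset.Icc 1 h,
        chi p ((s + (j : ZMod p) + a) * (s + (j : ZMod p) + a + 1))| ≤
      (h : ℝ) * (1 - 1 / (2 * (dstar p : ℝ))) + 4 := by
  have hicc : ∑ j ∈ Finset.Icc 1 h,
      chi p ((s + (j : ZMod p) + a) * (s + (j : ZMod p) + a + 1)) =
      ∑ k ∈ Finset.range h,
      chi p (((s + a) + (k : ZMod p) + 1) * ((s + a) + (k : ZMod p) + 2)) := by
    rw [← Finset.Ico_add_one_right_eq_Icc, Finset.sum_Ico_eq_sum_range]
    apply Finset.sum_congr rfl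
    intro k _
    congr 1
    push_cast
    ring
  rw [hicc]
  have := main_bound p hp h (s + a)
  linarith
end

section
/- Let p be a prime, A ⊆ F_p a nonempty set with |A + A| ≤ K·|A| for some real K ≥ 1, and let d ≥ 2 be an integer. Then there exist an element a_* ∈ A and a set W ⊆ A − a_* with |W| ≥ |A| / K^{3d−3} such that j·W ⊆ A − A for every integer j ∈ {1, 2, …, d} (where j acts by multiplication by the image of j in F_p). -/
/-!
Put `n = d - 1` and let `Ψ : Aⁿ⁺¹ → (A - A - A)ⁿ`, `Ψ(a)ₖ = aₖ₊₁ - aₖ - a₀`. If `Ψ a = Ψ b`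
then `bₖ - aₖ = (k + 1)(b₀ - a₀)` for all `k`, so within a fibre `b` is determined by `b₀`, and
`j(b₀ - a₀) ∈ A - A` for `j = 1, …, d`. Hence every fibre has at most
`M = max_{x ∈ A} #{y ∈ A | j(y - x) ∈ A - A for 1 ≤ j ≤ d}` elements, so
`#A ^ d ≤ M · #(A - A - A) ^ (d - 1) ≤ M · (K³ #A) ^ (d - 1)` by Plünnecke–Ruzsa,
and `W = {y - x}` for a maximising `x` works.
-/

open Finset Pointwise

variable {G : Type*} [AddCommGroup G]

def diffMap {n : ℕ} (a : Fin (n + 1) → G) : Fin n → G :=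
  fun k => a k.succ - a k.castSucc - a 0

lemma sub_eq_succ_nsmul_of_diffMap_eq {n : ℕ} {a b : Fin (n + 1) → G}
    (h : diffMap a = diffMap b) (k : Fin (n + 1)) :
    b k - a k = ((k : ℕ) + 1) • (b 0 - a 0) := by
  induction k using Fin.induction with
  | zero => simp
  | succ k ih =>
    have hk : a k.succ - a k.castSucc - a 0 = b k.succ - b k.castSucc - b 0 := congrFun h k
    rw [Fin.val_succ, succ_nsmul, ← Fin.val_castSucc, ← ih]
    linear_combination (norm := abel) -hk

lemma eq_of_diffMap_eq_of_apply_zero_eq {n : ℕ} {a b : Fin (n + 1) → G}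
    (h : diffMap a = diffMap b) (h0 : a 0 = b 0) : a = b := by
  funext k
  exact (sub_eq_zero.1 (by simpa [h0] using sub_eq_succ_nsmul_of_diffMap_eq h k)).symm

variable [DecidableEq G]

lemma diffMap_mem_piFinset {A : Finset G} {n : ℕ} {a : Fin (n + 1) → G}
    (ha : a ∈ Fintype.piFinset fun _ => A) :
    diffMap a ∈ Fintype.piFinset fun _ => A - A - A := by
  rw [Fintype.mem_piFinset] at ha ⊢
  exact fun k => sub_mem_sub (sub_mem_sub (ha _) (ha _)) (ha _)

def dilationPartners (A : Finset G) (d : ℕ) (x : G) : Finset G :=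
  {y ∈ A | ∀ j ∈ Icc 1 d, j • (y - x) ∈ A - A}

lemma card_filter_diffMap_eq_le {A : Finset G} {n : ℕ} {a : Fin (n + 1) → G}
    (ha : a ∈ Fintype.piFinset fun _ => A) :
    #{b ∈ Fintype.piFinset (fun _ => A) | diffMap b = diffMap a}
      ≤ #(dilationPartners A (n + 1) (a 0)) := by
  rw [Fintype.mem_piFinset] at ha
  refine card_le_card_of_injOn (fun b => b 0) (fun b hb => ?_) fun b hb b' hb' h0 => ?_
  · simp only [coe_filter, Fintype.mem_piFinset, Set.mem_ofPred_eq] at hb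
    refine mem_filter.2 ⟨hb.1 0, fun j hj => ?_⟩
    obtain ⟨hj1, hjd⟩ := mem_Icc.1 hj
    have hk := sub_eq_succ_nsmul_of_diffMap_eq hb.2.symm ⟨j - 1, by omega⟩
    rw [Fin.val_mk, Nat.sub_add_cancel hj1] at hk
    exact hk ▸ sub_mem_sub (hb.1 _) (ha _)
  · simp only [coe_filter, Set.mem_ofPred_eq] at hb hb'
    exact eq_of_diffMap_eq_of_apply_zero_eq (hb.2.trans hb'.2.symm) h0

lemma exists_card_pow_le_mul_card_dilationPartners {A : Finset G} (hA : A.Nonempty) (n : ℕ) :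
    ∃ x ∈ A, #A ^ (n + 1) ≤ #(dilationPartners A (n + 1) x) * #(A - A - A) ^ n := by
  obtain ⟨x, hx, hmax⟩ := exists_max_image A (fun x => #(dilationPartners A (n + 1) x)) hA
  refine ⟨x, hx, ?_⟩
  have hcount := card_le_mul_card_image_of_maps_to
    (s := Fintype.piFinset fun _ : Fin (n + 1) => A) (t := Fintype.piFinset fun _ : Fin n => A - A - A) (fun a ha => diffMap_mem_piFinset ha)
    (#(dilationPartners A (n + 1) x)) fun c _ => ?_
  · simpa [Fintype.card_piFinset] using hcount
  obtain hempty | ⟨a, ha⟩ :=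
    {b ∈ Fintype.piFinset (fun _ : Fin (n + 1) => A) | diffMap b = c}.eq_empty_or_nonempty
  · simp [hempty]
  obtain ⟨haA, rfl⟩ := mem_filter.1 ha
  exact (card_filter_diffMap_eq_le haA).trans (hmax _ (Fintype.mem_piFinset.1 haA 0))

lemma card_sub_sub_le {A : Finset G} {K : ℝ} (hA : A.Nonempty)
    (hK : (#(A + A) : ℝ) ≤ K * #A) : (#(A - A - A) : ℝ) ≤ K ^ 3 * #A := by
  have hPR := pluennecke_ruzsa_inequality_nsmul_sub_nsmul_add hA A 1 2
  rw [one_nsmul, two_nsmul, ← sub_sub] at hPR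
  have hσ : (#(A + A) / #A : ℝ) ≤ K := (div_le_iff₀ (by simpa using hA.card_pos)).2 hK
  have hPR' := (NNRat.cast_le (K := ℝ)).2 hPR
  push_cast at hPR'
  calc (#(A - A - A) : ℝ) ≤ (#(A + A) / #A : ℝ) ^ 3 * #A := hPR'
    _ ≤ K ^ 3 * #A := by gcongr

theorem exists_card_dilationPartners_ge {A : Finset G} {K : ℝ} (hA : A.Nonempty)
    (hK : (#(A + A) : ℝ) ≤ K * #A) (n : ℕ) :
    ∃ x ∈ A, (#A : ℝ) / K ^ (3 * n) ≤ #(dilationPartners A (n + 1) x) := by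
  obtain ⟨x, hx, hcount⟩ := exists_card_pow_le_mul_card_dilationPartners hA n
  refine ⟨x, hx, ?_⟩
  have hApos : (0 : ℝ) < #A := by simpa using hA.card_pos
  have hKpos : 0 < K := pos_of_mul_pos_left
    (hApos.trans_le ((mod_cast card_le_card_add_left hA : (#A : ℝ) ≤ #(A + A)).trans hK)) hApos.le
  rw [div_le_iff₀ (by positivity), ← mul_le_mul_iff_left₀ (pow_pos hApos n)]
  calc (#A : ℝ) * #A ^ n = #A ^ (n + 1) := by ring
    _ ≤ #(dilationPartners A (n + 1) x) * #(A - A - A) ^ n := mod_cast hcount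
    _ ≤ #(dilationPartners A (n + 1) x) * (K ^ 3 * #A) ^ n := by
        gcongr; exact card_sub_sub_le hA hK
    _ = #(dilationPartners A (n + 1) x) * K ^ (3 * n) * #A ^ n := by ring

theorem stmt11_general (p : ℕ) (A : Finset (ZMod p)) (K : ℝ) (d : ℕ)
    (hA : A.Nonempty)
    (hdouble : ((A + A).card : ℝ) ≤ K * A.card) (hd : 2 ≤ d) :
    ∃ astar ∈ A, ∃ W : Finset (ZMod p),
      W ⊆ A.image (fun a => a - astar) ∧
      (A.card : ℝ) / K ^ (3 * d - 3) ≤ (W.card : ℝ) ∧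
      ∀ j ∈ Finset.Icc 1 d, W.image (fun w => (j : ZMod p) * w) ⊆ A - A := by
  obtain ⟨n, rfl⟩ : ∃ n, d = n + 1 := ⟨d - 1, by omega⟩
  obtain ⟨x, hx, hcard⟩ := exists_card_dilationPartners_ge hA hdouble n
  refine ⟨x, hx, (dilationPartners A (n + 1) x).image (· - x),
    image_subset_image (filter_subset _ _), ?_, ?_⟩
  · rw [card_image_of_injective _ sub_left_injective, show 3 * (n + 1) - 3 = 3 * n by omega]
    exact hcard
  · intro j hj
    simp only [image_image, image_subset_iff]
    intro y hy
    simpa [nsmul_eq_mul] using (mem_filter.1 hy).2 j hj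

theorem stmt11 (p : ℕ) [Fact p.Prime] (A : Finset (ZMod p)) (K : ℝ) (d : ℕ)
    (hA : A.Nonempty) (hK : 1 ≤ K)
    (hdouble : ((A + A).card : ℝ) ≤ K * A.card) (hd : 2 ≤ d) :
    ∃ astar ∈ A, ∃ W : Finset (ZMod p),
      W ⊆ A.image (fun a => a - astar) ∧
      (A.card : ℝ) / K ^ (3 * d - 3) ≤ (W.card : ℝ) ∧
      ∀ j ∈ Finset.Icc 1 d, W.image (fun w => (j : ZMod p) * w) ⊆ A - A :=
  stmt11_general p A K d hA hdouble hd
end
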